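/- The operators π'(α*) and π'(β), defined on the algebraic span of the basis of 𝓗 by the explicit formulas involving the matrices a±_{nij} and b±_{nij}, extend to bounded operators on 𝓗. -/

import Mathlib

noncomputable section

open Real

/-- The q-number `[m] = (q^m - q^(-m))/(q - q⁻¹)`. -/
def qnum (q m : ℝ) : ℝ := (q ^ m - q ^ (-m)) / (q - q⁻¹)

/-- The 2×2 matrix `a⁺_{nij}`. -/
def aP (q n i j : ℝ) : Matrix (Fin 2) (Fin 2) ℝ :=
  (q ^ ((i + j - 1/2) / 2) * Real.sqrt (qnum q (n + i + 1))) •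
    !![q ^ (-n - 1/2) * Real.sqrt (qnum q (n + j + 3/2)) / qnum q (2*n + 2), 0;
       q ^ ((1:ℝ)/2) * Real.sqrt (qnum q (n - j + 1/2)) / (qnum q (2*n + 1) * qnum q (2*n + 2)),
       q ^ (-n) * Real.sqrt (qnum q (n + j + 1/2)) / qnum q (2*n + 1)]

/-- The 2×2 matrix `a⁻_{nij}`. -/
def aM (q n i j : ℝ) : Matrix (Fin 2) (Fin 2) ℝ :=
  (q ^ ((i + j - 1/2) / 2) * Real.sqrt (qnum q (n - i))) •
    !![q ^ (n + 1) * Real.sqrt (qnum q (n - j + 1/2)) / qnum q (2*n + 1),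
       -(q ^ ((1:ℝ)/2) * Real.sqrt (qnum q (n + j + 1/2)) / (qnum q (2*n) * qnum q (2*n + 1)));
       0, q ^ (n + 1/2) * Real.sqrt (qnum q (n - j - 1/2)) / qnum q (2*n)]

/-- The 2×2 matrix `b⁺_{nij}`. -/
def bP (q n i j : ℝ) : Matrix (Fin 2) (Fin 2) ℝ :=
  (q ^ ((i + j - 1/2) / 2) * Real.sqrt (qnum q (n + i + 1))) •
    !![Real.sqrt (qnum q (n - j + 3/2)) / qnum q (2*n + 2), 0;
       -(q ^ (-n - 1) * Real.sqrt (qnum q (n + j + 1/2)) / (qnum q (2*n + 1) * qnum q (2*n + 2))),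
       q ^ (-(1:ℝ)/2) * Real.sqrt (qnum q (n - j + 1/2)) / qnum q (2*n + 1)]

/-- The 2×2 matrix `b⁻_{nij}`. -/
def bM (q n i j : ℝ) : Matrix (Fin 2) (Fin 2) ℝ :=
  (q ^ ((i + j - 1/2) / 2) * Real.sqrt (qnum q (n - i))) •
    !![-(q ^ (-(1:ℝ)/2) * Real.sqrt (qnum q (n + j + 1/2)) / qnum q (2*n + 1)),
       -(q ^ n * Real.sqrt (qnum q (n - j + 1/2)) / (qnum q (2*n) * qnum q (2*n + 1)));
       0, -(Real.sqrt (qnum q (n + j - 1/2)) / qnum q (2*n))]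

/-- `n` is a nonnegative half-integer: `n ∈ ½ℤ₊ = {0, 1/2, 1, 3/2, …}`. -/
def HalfNat (n : ℝ) : Prop := ∃ N : ℕ, (N : ℝ) = 2 * n

/-- `i ∈ {-n, -n+1, …, n}`. -/
def IdxRange (n i : ℝ) : Prop := (∃ k : ℕ, (k : ℝ) = i + n) ∧ i ≤ n

/-- `j ∈ {-n+1/2, -n+3/2, …, n-1/2}`. -/
def JRangeIn (n j : ℝ) : Prop := (∃ k : ℕ, (k : ℝ) = j + n - 1/2) ∧ j ≤ n - 1/2

/-- `j ∈ {-n-1/2, -n+1/2, …, n+1/2}`. -/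
def JRangeOut (n j : ℝ) : Prop := (∃ k : ℕ, (k : ℝ) = j + n + 1/2) ∧ j ≤ n + 1/2

/-- Validity of an index triple `(N, I, J)` (with `n = N/2`, `i = I/2`, `j = J/2`) for the basis
vectors `u^n_{ij}` of `𝓗`: `n ∈ ½ℤ₊`, `i ∈ {-n, …, n}`, `j ∈ {-n-1/2, …, n+1/2}`. -/
abbrev validU (x : ℤ × ℤ × ℤ) : Prop :=
  0 ≤ x.1 ∧ |x.2.1| ≤ x.1 ∧ (x.1 + x.2.1) % 2 = 0 ∧
    |x.2.2| ≤ x.1 + 1 ∧ (x.1 + 1 + x.2.2) % 2 = 0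

/-- Validity of an index triple `(N, I, J)` (with `n = N/2`, `i = I/2`, `j = J/2`) for the basis
vectors `d^n_{ij}` of `𝓗`: `n ≥ 1/2`, `i ∈ {-n, …, n}`, `j ∈ {-n+1/2, …, n-1/2}`. -/
abbrev validD (x : ℤ × ℤ × ℤ) : Prop :=
  1 ≤ x.1 ∧ |x.2.1| ≤ x.1 ∧ (x.1 + x.2.1) % 2 = 0 ∧
    |x.2.2| ≤ x.1 - 1 ∧ (x.1 + 1 + x.2.2) % 2 = 0

abbrev IdxW : Type := {x : ℤ × ℤ × ℤ // validU x} ⊕ {x : ℤ × ℤ × ℤ // validD x}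

/-- The Hilbert space `𝓗` with orthonormal basis `{u^n_{ij}} ∪ {d^n_{ij}}`. -/
abbrev Wsp : Type := lp (fun _ : IdxW => ℂ) 2

/-- The basis vector `u^n_{ij}` of `𝓗` (zero if out of range). -/
def eU (N I J : ℤ) : Wsp :=
  if h : validU (N, I, J) then lp.single 2 (Sum.inl ⟨(N, I, J), h⟩ : IdxW) (1 : ℂ) else 0

/-- The basis vector `d^n_{ij}` of `𝓗` (zero if out of range, in particular for
`j = ±(n+1/2)`). -/
def eD (N I J : ℤ) : Wsp :=
  if h : validD (N, I, J) then lp.single 2 (Sum.inr ⟨(N, I, J), h⟩ : IdxW) (1 : ℂ) else 0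

/-- the half-integer `N/2` as a real number -/
def nn (N : ℤ) : ℝ := (N : ℝ) / 2

/-- `P` acts on the basis vectors of `𝓗` by the defining formula of `π'(α*)`:
`π'(α*) v^n_{ij} = a⁺_{nij} v^(n+1/2)_{i+1/2,j+1/2} + a⁻_{nij} v^(n-1/2)_{i+1/2,j+1/2}`,
where `v^n_{ij} = (u^n_{ij}, d^n_{ij})` and a matrix `M` applied to the source pair gives the
coefficient `M₁₁u + M₁₂d` of the target `u`-vector and `M₂₁u + M₂₂d` of the target `d`-vector. -/
def IsPiAlphaStar (q : ℝ) (P : Wsp →L[ℂ] Wsp) : Prop :=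
  (∀ N I J : ℤ, validU (N, I, J) →
    P (eU N I J) =
      (aP q (nn N) (nn I) (nn J) 0 0 : ℂ) • eU (N + 1) (I + 1) (J + 1)
      + (aP q (nn N) (nn I) (nn J) 1 0 : ℂ) • eD (N + 1) (I + 1) (J + 1)
      + (aM q (nn N) (nn I) (nn J) 0 0 : ℂ) • eU (N - 1) (I + 1) (J + 1)
      + (aM q (nn N) (nn I) (nn J) 1 0 : ℂ) • eD (N - 1) (I + 1) (J + 1)) ∧
  (∀ N I J : ℤ, validD (N, I, J) →
    P (eD N I J) =
      (aP q (nn N) (nn I) (nn J) 0 1 : ℂ) • eU (N + 1) (I + 1) (J + 1)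
      + (aP q (nn N) (nn I) (nn J) 1 1 : ℂ) • eD (N + 1) (I + 1) (J + 1)
      + (aM q (nn N) (nn I) (nn J) 0 1 : ℂ) • eU (N - 1) (I + 1) (J + 1)
      + (aM q (nn N) (nn I) (nn J) 1 1 : ℂ) • eD (N - 1) (I + 1) (J + 1))

/-- `P` acts on the basis vectors of `𝓗` by the defining formula of `π'(β)`:
`π'(β) v^n_{ij} = -(b⁺_{nij} v^(n+1/2)_{i+1/2,j-1/2} + b⁻_{nij} v^(n-1/2)_{i+1/2,j-1/2})`. -/
def IsPiBeta (q : ℝ) (P : Wsp →L[ℂ] Wsp) : Prop :=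
  (∀ N I J : ℤ, validU (N, I, J) →
    P (eU N I J) =
      (-(bP q (nn N) (nn I) (nn J) 0 0) : ℂ) • eU (N + 1) (I + 1) (J - 1)
      + (-(bP q (nn N) (nn I) (nn J) 1 0) : ℂ) • eD (N + 1) (I + 1) (J - 1)
      + (-(bM q (nn N) (nn I) (nn J) 0 0) : ℂ) • eU (N - 1) (I + 1) (J - 1)
      + (-(bM q (nn N) (nn I) (nn J) 1 0) : ℂ) • eD (N - 1) (I + 1) (J - 1)) ∧
  (∀ N I J : ℤ, validD (N, I, J) →
    P (eD N I J) =
      (-(bP q (nn N) (nn I) (nn J) 0 1) : ℂ) • eU (N + 1) (I + 1) (J - 1)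
      + (-(bP q (nn N) (nn I) (nn J) 1 1) : ℂ) • eD (N + 1) (I + 1) (J - 1)
      + (-(bM q (nn N) (nn I) (nn J) 0 1) : ℂ) • eU (N - 1) (I + 1) (J - 1)
      + (-(bM q (nn N) (nn I) (nn J) 1 1) : ℂ) • eD (N - 1) (I + 1) (J - 1))

/-! Every nonzero coefficient of `a±`, `b±` has the shape `q^E₁ √[A] · q^E₂ √[B] / ([d₁][d₂])`
with `d₁, d₂ ≥ 1`. For `0 < q < 1` we have `√[A] ≤ q^((1-A)/2) / √(1-q²)` and `[d] ≥ q^(1-d)`,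
so such a coefficient is at most `q^S / (1-q²)`, and on the index range of the basis the exponent
`S` is nonnegative: all coefficients are bounded by `1/(1-q²)`. Each of `π'(α*)`, `π'(β)` is a
finite sum of weighted shifts along injective partial maps of the basis, and a shift with bounded
weights is a bounded operator on `ℓ²`. -/

open scoped ENNReal

section WeightedComp

variable {ι κ 𝕜 : Type*} [NormedField 𝕜] {p : ℝ≥0∞} [Fact (1 ≤ p)]
  (φ : ι → Option κ) (w : κ → 𝕜)

def weightedCompFun (f : κ → 𝕜) (y : ι) : 𝕜 := (φ y).elim 0 fun x => w x * f x

variable {φ w} {C : ℝ}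

theorem sum_norm_rpow_weightedCompFun_le (hp : p ≠ ∞)
    (hφ : ∀ y y' x, φ y = some x → φ y' = some x → y = y')
    (hC : 0 ≤ C) (hw : ∀ y x, φ y = some x → ‖w x‖ ≤ C)
    (f : lp (fun _ : κ => 𝕜) p) (s : Finset ι) :
    ∑ y ∈ s, ‖weightedCompFun φ w f y‖ ^ p.toReal ≤ (C * ‖f‖) ^ p.toReal := by
  classical
  have hp0 : 0 < p.toReal := ENNReal.toReal_pos (zero_lt_one.trans_le Fact.out).ne' hp
  set t := s.biUnion fun y => (φ y).toFinset
  have hdisj : (s : Set ι).PairwiseDisjoint fun y => (φ y).toFinset := by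
    intro y _ y' _ hne
    simp only [Function.onFun, Finset.disjoint_left, Option.mem_toFinset, Option.mem_def]
    exact fun x hx hx' => hne (hφ _ _ x hx hx')
  calc ∑ y ∈ s, ‖weightedCompFun φ w f y‖ ^ p.toReal
      = ∑ y ∈ s, ∑ x ∈ (φ y).toFinset, ‖w x * f x‖ ^ p.toReal := by
        refine Finset.sum_congr rfl fun y _ => ?_
        rcases h : φ y with _ | x <;> simp [weightedCompFun, h, Real.zero_rpow hp0.ne']
    _ = ∑ x ∈ t, ‖w x * f x‖ ^ p.toReal := (Finset.sum_biUnion hdisj).symm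
    _ ≤ ∑ x ∈ t, C ^ p.toReal * ‖f x‖ ^ p.toReal := by
        refine Finset.sum_le_sum fun x hx => ?_
        obtain ⟨y, -, hy⟩ := Finset.mem_biUnion.mp hx
        rw [norm_mul, Real.mul_rpow (norm_nonneg _) (norm_nonneg _)]
        gcongr
        exact hw y x (Option.mem_toFinset.mp hy)
    _ ≤ C ^ p.toReal * ‖f‖ ^ p.toReal := by
        rw [← Finset.mul_sum]
        exact mul_le_mul_of_nonneg_left (lp.sum_rpow_le_norm_rpow hp0 f t) (by positivity)
    _ = (C * ‖f‖) ^ p.toReal := (Real.mul_rpow hC (norm_nonneg f)).symm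

variable (hp : p ≠ ∞) (hφ : ∀ y y' x, φ y = some x → φ y' = some x → y = y')
  (hC : 0 ≤ C) (hw : ∀ y x, φ y = some x → ‖w x‖ ≤ C)
include hp hφ hC hw

theorem memℓp_weightedCompFun (f : lp (fun _ : κ => 𝕜) p) : Memℓp (weightedCompFun φ w f) p :=
  memℓp_gen' (sum_norm_rpow_weightedCompFun_le hp hφ hC hw f)

def weightedCompOp : lp (fun _ : κ => 𝕜) p →L[𝕜] lp (fun _ : ι => 𝕜) p :=
  LinearMap.mkContinuous
    { toFun f := ⟨weightedCompFun φ w f, memℓp_weightedCompFun hp hφ hC hw f⟩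
      map_add' f g := by
        ext y
        change weightedCompFun φ w ⇑(f + g) y = weightedCompFun φ w f y + weightedCompFun φ w g y
        rcases h : φ y with _ | x <;> simp [weightedCompFun, h, mul_add]
      map_smul' c f := by
        ext y
        rcases h : φ y with _ | x <;> simp [weightedCompFun, h, mul_left_comm] }
    C fun f => lp.norm_le_of_forall_sum_le
      (ENNReal.toReal_pos (zero_lt_one.trans_le Fact.out).ne' hp) (by positivity)
      (sum_norm_rpow_weightedCompFun_le hp hφ hC hw f)

theorem weightedCompOp_single [DecidableEq ι] [DecidableEq κ] (x : κ) (τ : Option ι)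
    (hτ : ∀ y, φ y = some x ↔ τ = some y) :
    weightedCompOp hp hφ hC hw (lp.single p x 1) = w x • τ.elim 0 fun y => lp.single p y 1 := by
  ext y
  change weightedCompFun φ w (Pi.single x 1) y = _
  rcases τ with _ | y₀
  · rcases h : φ y with _ | x'
    · simp [weightedCompFun, h]
    · have : x' ≠ x := fun e => by simpa using (hτ y).mp (e ▸ h)
      simp [weightedCompFun, h, this]
  · by_cases hy : y = y₀
    · subst hy; simp [weightedCompFun, (hτ y).mpr rfl]
    · rcases h : φ y with _ | x'
      · simp [weightedCompFun, h, hy]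
      · have : x' ≠ x := fun e => hy (Option.some_injective _ ((hτ y).mp (e ▸ h))).symm
        simp [weightedCompFun, h, this, hy]

end WeightedComp

section QNumber

variable {q : ℝ}

theorem sub_inv_ne_zero (hq0 : 0 < q) (hq1 : q ≠ 1) : q - q⁻¹ ≠ 0 := by
  rw [sub_ne_zero]
  intro h
  have : q * q = 1 := by rw [← mul_inv_cancel₀ hq0.ne', ← h]
  rcases mul_self_eq_one_iff.mp this with h1 | h1
  · exact hq1 h1
  · linarith

theorem one_sub_sq_ne_zero (hq0 : 0 < q) (hq1 : q ≠ 1) : 1 - q ^ 2 ≠ 0 :=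
  sub_ne_zero.mpr fun h => hq1 ((pow_eq_one_iff_of_nonneg hq0.le two_ne_zero).mp h.symm)

theorem qnum_eq (hq0 : 0 < q) (hq1 : q ≠ 1) (m : ℝ) :
    qnum q m = (q ^ (1 - m) - q ^ (1 + m)) / (1 - q ^ 2) := by
  rw [qnum, div_eq_div_iff (sub_inv_ne_zero hq0 hq1) (one_sub_sq_ne_zero hq0 hq1),
    Real.rpow_sub hq0, Real.rpow_add hq0, Real.rpow_neg hq0.le, Real.rpow_one]
  field_simp
  ring

theorem qnum_one (hq0 : 0 < q) (hq1 : q ≠ 1) : qnum q 1 = 1 := by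
  rw [qnum, Real.rpow_one, Real.rpow_neg_one, div_self (sub_inv_ne_zero hq0 hq1)]

variable (hq0 : 0 < q) (hq1 : q < 1)
include hq0 hq1

theorem qnum_le (m : ℝ) : qnum q m ≤ q ^ (1 - m) / (1 - q ^ 2) := by
  rw [qnum_eq hq0 hq1.ne]
  gcongr
  · nlinarith
  · exact sub_le_self _ (Real.rpow_nonneg hq0.le _)

theorem sqrt_qnum_le (m : ℝ) : √(qnum q m) ≤ q ^ ((1 - m) / 2) / √(1 - q ^ 2) := by
  calc √(qnum q m) ≤ √(q ^ (1 - m) / (1 - q ^ 2)) := Real.sqrt_le_sqrt (qnum_le hq0 hq1 m)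
    _ = q ^ ((1 - m) / 2) / √(1 - q ^ 2) := by
      rw [Real.sqrt_div' _ (by nlinarith), Real.sqrt_eq_rpow, ← Real.rpow_mul hq0.le]
      ring_nf

theorem rpow_one_sub_le_qnum {d : ℝ} (hd : 1 ≤ d) : q ^ (1 - d) ≤ qnum q d := by
  have hq2 : 0 < 1 - q ^ 2 := by nlinarith
  rw [qnum_eq hq0 hq1.ne, le_div_iff₀ hq2]
  have : q ^ (1 + d) ≤ q ^ (1 - d) * q ^ 2 := by
    rw [← Real.rpow_natCast, ← Real.rpow_add hq0]
    exact Real.rpow_le_rpow_of_exponent_ge hq0 hq1.le (by push_cast; linarith)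
  nlinarith

theorem qnum_pos {d : ℝ} (hd : 1 ≤ d) : 0 < qnum q d :=
  (Real.rpow_pos_of_pos hq0 _).trans_le (rpow_one_sub_le_qnum hq0 hq1 hd)

theorem one_div_one_sub_sq_nonneg : 0 ≤ 1 / (1 - q ^ 2) :=
  one_div_nonneg.mpr (by nlinarith)

theorem abs_qEntry_le {E₁ E₂ A B d₁ d₂ : ℝ} (hd₁ : 1 ≤ d₁) (hd₂ : 1 ≤ d₂)
    (hS : 0 ≤ E₁ + E₂ + (1 - A) / 2 + (1 - B) / 2 + (d₁ - 1) + (d₂ - 1)) :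
    |q ^ E₁ * √(qnum q A) * (q ^ E₂ * √(qnum q B) / (qnum q d₁ * qnum q d₂))| ≤
      1 / (1 - q ^ 2) := by
  have hq2 : 0 < 1 - q ^ 2 := by nlinarith
  have := qnum_pos hq0 hq1 hd₁
  have := qnum_pos hq0 hq1 hd₂
  rw [abs_of_nonneg (by positivity)]
  calc q ^ E₁ * √(qnum q A) * (q ^ E₂ * √(qnum q B) / (qnum q d₁ * qnum q d₂))
      ≤ q ^ E₁ * (q ^ ((1 - A) / 2) / √(1 - q ^ 2)) *
          (q ^ E₂ * (q ^ ((1 - B) / 2) / √(1 - q ^ 2)) / (q ^ (1 - d₁) * q ^ (1 - d₂))) := by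
        gcongr
        exacts [sqrt_qnum_le hq0 hq1 A, sqrt_qnum_le hq0 hq1 B, rpow_one_sub_le_qnum hq0 hq1 hd₁,
          rpow_one_sub_le_qnum hq0 hq1 hd₂]
    _ = q ^ (E₁ + E₂ + (1 - A) / 2 + (1 - B) / 2 + (d₁ - 1) + (d₂ - 1)) / (1 - q ^ 2) := by
        rw [show d₁ - 1 = -(1 - d₁) by ring, show d₂ - 1 = -(1 - d₂) by ring]
        simp only [Real.rpow_add hq0, Real.rpow_neg hq0.le]
        field_simp
        rw [Real.sq_sqrt hq2.le]
    _ ≤ 1 / (1 - q ^ 2) := by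
        gcongr
        exact Real.rpow_le_one hq0.le hq1.le hS

theorem abs_qEntry_le' {E₁ E₂ A B d : ℝ} (hd : 1 ≤ d)
    (hS : 0 ≤ E₁ + E₂ + (1 - A) / 2 + (1 - B) / 2 + (d - 1)) :
    |q ^ E₁ * √(qnum q A) * (q ^ E₂ * √(qnum q B) / qnum q d)| ≤ 1 / (1 - q ^ 2) := by
  simpa [qnum_one hq0 hq1.ne] using abs_qEntry_le hq0 hq1 hd le_rfl (by linarith)

end QNumber

abbrev validOf (k : Fin 2) : ℤ × ℤ × ℤ → Prop := ![validU, validD] k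

theorem nn_bounds_of_validU {N I J : ℤ} (h : validU (N, I, J)) :
    0 ≤ nn N ∧ -nn N ≤ nn I ∧ -nn N - 1 / 2 ≤ nn J := by
  obtain ⟨h1, h2, -, h4, -⟩ := h
  rw [abs_le] at h2 h4
  rify at h1 h2 h4
  unfold nn
  exact ⟨by linarith, by linarith, by linarith⟩

theorem nn_bounds_of_validD {N I J : ℤ} (h : validD (N, I, J)) :
    1 / 2 ≤ nn N ∧ -nn N ≤ nn I ∧ -nn N + 1 / 2 ≤ nn J := by
  obtain ⟨h1, h2, -, h4, -⟩ := h
  rw [abs_le] at h2 h4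
  rify at h1 h2 h4
  unfold nn
  exact ⟨by linarith, by linarith, by linarith⟩

section EntryBounds

variable {q : ℝ} (hq0 : 0 < q) (hq1 : q < 1)
include hq0 hq1

theorem abs_aP_le (s t : Fin 2) (N I J : ℤ) (hc : validOf s (N, I, J)) :
    |aP q (nn N) (nn I) (nn J) t s| ≤ 1 / (1 - q ^ 2) := by
  fin_cases s <;> fin_cases t <;>
    simp only [aP, Fin.zero_eta, Fin.mk_one, Matrix.smul_apply, Matrix.of_apply,
      Matrix.cons_val_zero, Matrix.cons_val_one, smul_eq_mul, mul_zero, abs_zero]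
  · obtain ⟨hn, hi, hj⟩ := nn_bounds_of_validU hc
    exact abs_qEntry_le' hq0 hq1 (by linarith) (by linarith)
  · obtain ⟨hn, hi, hj⟩ := nn_bounds_of_validU hc
    exact abs_qEntry_le hq0 hq1 (by linarith) (by linarith) (by linarith)
  · exact one_div_one_sub_sq_nonneg hq0 hq1
  · obtain ⟨hn, hi, hj⟩ := nn_bounds_of_validD hc
    exact abs_qEntry_le' hq0 hq1 (by linarith) (by linarith)

theorem abs_aM_le (s t : Fin 2) (N I J : ℤ) (hc : validOf s (N, I, J)) :
    |aM q (nn N) (nn I) (nn J) t s| ≤ 1 / (1 - q ^ 2) := by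
  fin_cases s <;> fin_cases t <;>
    simp only [aM, Fin.zero_eta, Fin.mk_one, Matrix.smul_apply, Matrix.of_apply,
      Matrix.cons_val_zero, Matrix.cons_val_one, smul_eq_mul, mul_zero, abs_zero, mul_neg, abs_neg]
  · obtain ⟨hn, hi, hj⟩ := nn_bounds_of_validU hc
    exact abs_qEntry_le' hq0 hq1 (by linarith) (by linarith)
  · exact one_div_one_sub_sq_nonneg hq0 hq1
  · obtain ⟨hn, hi, hj⟩ := nn_bounds_of_validD hc
    exact abs_qEntry_le hq0 hq1 (by linarith) (by linarith) (by linarith)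
  · obtain ⟨hn, hi, hj⟩ := nn_bounds_of_validD hc
    exact abs_qEntry_le' hq0 hq1 (by linarith) (by linarith)

theorem abs_bP_le (s t : Fin 2) (N I J : ℤ) (hc : validOf s (N, I, J)) :
    |bP q (nn N) (nn I) (nn J) t s| ≤ 1 / (1 - q ^ 2) := by
  fin_cases s <;> fin_cases t <;>
    simp only [bP, Fin.zero_eta, Fin.mk_one, Matrix.smul_apply, Matrix.of_apply,
      Matrix.cons_val_zero, Matrix.cons_val_one, smul_eq_mul, mul_zero, abs_zero, mul_neg, abs_neg]
  · obtain ⟨hn, hi, hj⟩ := nn_bounds_of_validU hc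
    simpa using abs_qEntry_le' hq0 hq1 (E₁ := (nn I + nn J - 1 / 2) / 2) (E₂ := 0)
      (A := nn N + nn I + 1) (B := nn N - nn J + 3 / 2) (d := 2 * nn N + 2)
      (by linarith) (by linarith)
  · obtain ⟨hn, hi, hj⟩ := nn_bounds_of_validU hc
    exact abs_qEntry_le hq0 hq1 (by linarith) (by linarith) (by linarith)
  · exact one_div_one_sub_sq_nonneg hq0 hq1
  · obtain ⟨hn, hi, hj⟩ := nn_bounds_of_validD hc
    exact abs_qEntry_le' hq0 hq1 (by linarith) (by linarith)

theorem abs_bM_le (s t : Fin 2) (N I J : ℤ) (hc : validOf s (N, I, J)) :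
    |bM q (nn N) (nn I) (nn J) t s| ≤ 1 / (1 - q ^ 2) := by
  fin_cases s <;> fin_cases t <;>
    simp only [bM, Fin.zero_eta, Fin.mk_one, Matrix.smul_apply, Matrix.of_apply,
      Matrix.cons_val_zero, Matrix.cons_val_one, smul_eq_mul, mul_zero, abs_zero, mul_neg, abs_neg]
  · obtain ⟨hn, hi, hj⟩ := nn_bounds_of_validU hc
    exact abs_qEntry_le' hq0 hq1 (by linarith) (by linarith)
  · exact one_div_one_sub_sq_nonneg hq0 hq1
  · obtain ⟨hn, hi, hj⟩ := nn_bounds_of_validD hc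
    exact abs_qEntry_le hq0 hq1 (by linarith) (by linarith) (by linarith)
  · obtain ⟨hn, hi, hj⟩ := nn_bounds_of_validD hc
    simpa using abs_qEntry_le' hq0 hq1 (E₁ := (nn I + nn J - 1 / 2) / 2) (E₂ := 0)
      (A := nn N - nn I) (B := nn N + nn J - 1 / 2) (d := 2 * nn N) (by linarith) (by linarith)

end EntryBounds

namespace IdxW

/-- `0` for the indices of the `u`-vectors, `1` for those of the `d`-vectors. -/
def kind : IdxW → Fin 2
  | .inl _ => 0
  | .inr _ => 1

def coord : IdxW → ℤ × ℤ × ℤ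
  | .inl x => x.1
  | .inr x => x.1

theorem ext_kind_coord {x y : IdxW} (hk : kind x = kind y) (hc : coord x = coord y) : x = y := by
  rcases x with x | x <;> rcases y with y | y <;>
    first | exact congrArg _ (Subtype.ext hc) | cases hk

def ofCoord (k : Fin 2) (c : ℤ × ℤ × ℤ) : Option IdxW :=
  if k = 0 then (if h : validU c then some (.inl ⟨c, h⟩) else none)
  else if h : validD c then some (.inr ⟨c, h⟩) else none

theorem ofCoord_eq_some {k : Fin 2} {c : ℤ × ℤ × ℤ} {y : IdxW} :
    ofCoord k c = some y ↔ kind y = k ∧ coord y = c := by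
  fin_cases k <;> rcases y with ⟨y, hy⟩ | ⟨y, hy⟩ <;> simp [ofCoord, kind, coord]
  all_goals exact ⟨fun h => h.2.symm, fun h => h ▸ ⟨hy, rfl⟩⟩

theorem validOf_coord (x : IdxW) : validOf (kind x) (coord x) := by
  rcases x with ⟨_, h⟩ | ⟨_, h⟩ <;> exact h

end IdxW

def basisVec (k : Fin 2) (c : ℤ × ℤ × ℤ) : Wsp :=
  (IdxW.ofCoord k c).elim 0 fun y => lp.single 2 y 1

theorem basisVec_zero (N I J : ℤ) : basisVec 0 (N, I, J) = eU N I J := by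
  unfold basisVec eU IdxW.ofCoord
  split_ifs <;> first | rfl | contradiction

theorem basisVec_one (N I J : ℤ) : basisVec 1 (N, I, J) = eD N I J := by
  unfold basisVec eD IdxW.ofCoord
  split_ifs <;> first | rfl | contradiction

def shiftSrc (s t : Fin 2) (δ : ℤ × ℤ × ℤ) (y : IdxW) : Option IdxW :=
  if IdxW.kind y = t then IdxW.ofCoord s (IdxW.coord y - δ) else none

theorem shiftSrc_eq_some {s t : Fin 2} {δ : ℤ × ℤ × ℤ} {x y : IdxW} :
    shiftSrc s t δ y = some x ↔
      IdxW.kind x = s ∧ IdxW.kind y = t ∧ IdxW.coord y = IdxW.coord x + δ := by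
  unfold shiftSrc
  split_ifs with h
  · rw [IdxW.ofCoord_eq_some, eq_sub_iff_add_eq, eq_comm (a := _ + δ)]
    simp [h]
  · simp [h]

theorem shiftSrc_injective (s t : Fin 2) (δ : ℤ × ℤ × ℤ) (y y' x : IdxW)
    (hy : shiftSrc s t δ y = some x) (hy' : shiftSrc s t δ y' = some x) : y = y' := by
  rw [shiftSrc_eq_some] at hy hy'
  exact IdxW.ext_kind_coord (hy.2.1.trans hy'.2.1.symm) (hy.2.2.trans hy'.2.2.symm)

section Shift

variable {C : ℝ} (hC : 0 ≤ C) {M : ℝ → ℝ → ℝ → Matrix (Fin 2) (Fin 2) ℝ}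
  (hM : ∀ s t N I J, validOf s (N, I, J) → |M (nn N) (nn I) (nn J) t s| ≤ C)

def shiftOp (s t : Fin 2) (δ : ℤ × ℤ × ℤ) : Wsp →L[ℂ] Wsp :=
  weightedCompOp (φ := shiftSrc s t δ)
    (w := fun x =>
      (M (nn (IdxW.coord x).1) (nn (IdxW.coord x).2.1) (nn (IdxW.coord x).2.2) t s : ℂ))
    (by norm_num) (shiftSrc_injective s t δ) hC fun y x hx => by
      obtain ⟨hs, -⟩ := shiftSrc_eq_some.mp hx
      rw [Complex.norm_real, Real.norm_eq_abs]
      exact hM s t _ _ _ (hs ▸ IdxW.validOf_coord x)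

theorem shiftOp_single (s t : Fin 2) (δ : ℤ × ℤ × ℤ) (x : IdxW) :
    shiftOp hC hM s t δ (lp.single 2 x 1) =
      if IdxW.kind x = s then
        (M (nn (IdxW.coord x).1) (nn (IdxW.coord x).2.1) (nn (IdxW.coord x).2.2) t s : ℂ) •
          basisVec t (IdxW.coord x + δ)
      else 0 := by
  rw [shiftOp, weightedCompOp_single (τ := if IdxW.kind x = s then
      IdxW.ofCoord t (IdxW.coord x + δ) else none)]
  · split_ifs <;> simp [basisVec]
  · intro y
    rw [shiftSrc_eq_some]
    split_ifs with h <;> simp [IdxW.ofCoord_eq_some, h]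

def matShift (δ : ℤ × ℤ × ℤ) : Wsp →L[ℂ] Wsp := ∑ s, ∑ t, shiftOp hC hM s t δ

theorem matShift_single (δ : ℤ × ℤ × ℤ) (x : IdxW) :
    matShift hC hM δ (lp.single 2 x 1) = ∑ t, (M (nn (IdxW.coord x).1) (nn (IdxW.coord x).2.1)
      (nn (IdxW.coord x).2.2) t (IdxW.kind x) : ℂ) • basisVec t (IdxW.coord x + δ) := by
  simp only [matShift, sum_apply, shiftOp_single]
  rw [Finset.sum_comm]
  simp

end Shift

section Operators

variable {q : ℝ} (hq0 : 0 < q) (hq1 : q < 1)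

def piAlphaStarOp : Wsp →L[ℂ] Wsp :=
  matShift (one_div_one_sub_sq_nonneg hq0 hq1) (abs_aP_le hq0 hq1) (1, 1, 1) +
    matShift (one_div_one_sub_sq_nonneg hq0 hq1) (abs_aM_le hq0 hq1) (-1, 1, 1)

def piBetaOp : Wsp →L[ℂ] Wsp :=
  -(matShift (one_div_one_sub_sq_nonneg hq0 hq1) (abs_bP_le hq0 hq1) (1, 1, -1) +
    matShift (one_div_one_sub_sq_nonneg hq0 hq1) (abs_bM_le hq0 hq1) (-1, 1, -1))

theorem eU_eq_single {N I J : ℤ} (h : validU (N, I, J)) :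
    eU N I J = lp.single 2 (.inl ⟨(N, I, J), h⟩) 1 := dif_pos h

theorem eD_eq_single {N I J : ℤ} (h : validD (N, I, J)) :
    eD N I J = lp.single 2 (.inr ⟨(N, I, J), h⟩) 1 := dif_pos h

theorem isPiAlphaStar_piAlphaStarOp : IsPiAlphaStar q (piAlphaStarOp hq0 hq1) := by
  constructor <;> intro N I J h <;> [rw [eU_eq_single h]; rw [eD_eq_single h]] <;>
    simp [piAlphaStarOp, matShift_single, Fin.sum_univ_two, basisVec_zero, basisVec_one,
      IdxW.kind, IdxW.coord, ← sub_eq_add_neg, add_assoc]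

theorem isPiBeta_piBetaOp : IsPiBeta q (piBetaOp hq0 hq1) := by
  constructor <;> intro N I J h <;> [rw [eU_eq_single h]; rw [eD_eq_single h]] <;>
    simp only [piBetaOp, neg_apply, add_apply, matShift_single, Fin.sum_univ_two, basisVec_zero,
      basisVec_one, IdxW.kind, IdxW.coord, Prod.mk_add_mk, neg_smul,
      ← sub_eq_add_neg] <;>
    abel

end Operators

/-- The operators `π'(α*)` and `π'(β)`, defined on the algebraic span of the
basis of `𝓗` by the explicit formulas involving the matrices `a±_{nij}` and `b±_{nij}`, extend
to bounded operators on `𝓗`. -/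
theorem piAlphaStar_piBeta_bounded (q : ℝ) (hq0 : 0 < q) (hq1 : q < 1) :
    ∃ A B : Wsp →L[ℂ] Wsp, IsPiAlphaStar q A ∧ IsPiBeta q B :=
  ⟨piAlphaStarOp hq0 hq1, piBetaOp hq0 hq1, isPiAlphaStar_piAlphaStarOp hq0 hq1,
    isPiBeta_piBetaOp hq0 hq1⟩
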